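/- arXiv:1710.10378 — 3 statements merged into one kernel-verified Lean document; each statement's English description precedes it below -/
import Mathlib

section
/- Let μ₁ < 0, σ₁ > 0, K > 0. For every integer k ≥ ⌊-2K/μ₁⌋ + 1, the ratio exp(-((K-(k+1)μ₁)/(√(k+1)σ₁))²/2) / exp(-((K-kμ₁)/(√k σ₁))²/2) equals exp(-μ₁²/(2σ₁²) + K²/(2k(k+1)σ₁²)) and is strictly less than exp(-3μ₁²/(8σ₁²)). -/
open Real

/-- For `μ₁ < 0`, `σ₁ > 0`, `K > 0` and integer `k ≥ ⌊-2K/μ₁⌋ + 1`, the ratio of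
consecutive Gaussian tail bounds equals
`exp (-μ₁²/(2σ₁²) + K²/(2k(k+1)σ₁²))` and is strictly less than `exp (-3μ₁²/(8σ₁²))`. -/
theorem gaussian_tail_ratio (μ₁ σ₁ K : ℝ) (hμ₁ : μ₁ < 0) (hσ₁ : 0 < σ₁) (hK : 0 < K)
    (k : ℕ) (hk : Nat.floor (-2 * K / μ₁) + 1 ≤ k) :
    rexp (-((K - ((k : ℝ) + 1) * μ₁) / (Real.sqrt ((k : ℝ) + 1) * σ₁)) ^ 2 / 2) /
        rexp (-((K - (k : ℝ) * μ₁) / (Real.sqrt (k : ℝ) * σ₁)) ^ 2 / 2)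
      = rexp (-μ₁ ^ 2 / (2 * σ₁ ^ 2) + K ^ 2 / (2 * k * ((k : ℝ) + 1) * σ₁ ^ 2)) ∧
    rexp (-((K - ((k : ℝ) + 1) * μ₁) / (Real.sqrt ((k : ℝ) + 1) * σ₁)) ^ 2 / 2) /
        rexp (-((K - (k : ℝ) * μ₁) / (Real.sqrt (k : ℝ) * σ₁)) ^ 2 / 2)
      < rexp (-3 * μ₁ ^ 2 / (8 * σ₁ ^ 2)) := by
  have hk1 : 1 ≤ k := le_trans (Nat.le_add_left 1 _) hk
  have hkR : (1:ℝ) ≤ (k:ℝ) := by exact_mod_cast hk1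
  have hkpos : (0:ℝ) < (k:ℝ) := by linarith
  have hx : -2 * K / μ₁ < (k:ℝ) := Nat.lt_of_floor_lt (by omega)
  have hkμ : (k:ℝ) * μ₁ < -(2 * K) := by
    have := (div_lt_iff_of_neg hμ₁).mp hx
    linarith
  have hsq : 4 * K ^ 2 < (k:ℝ)^2 * μ₁^2 := by nlinarith
  have hs1 : Real.sqrt (k:ℝ) ^ 2 = (k:ℝ) := Real.sq_sqrt hkpos.le
  have hs2 : Real.sqrt ((k:ℝ)+1) ^ 2 = (k:ℝ)+1 := Real.sq_sqrt (by linarith)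
  have hs1ne : Real.sqrt (k:ℝ) ≠ 0 := by positivity
  have hs2ne : Real.sqrt ((k:ℝ)+1) ≠ 0 := by positivity
  have heq : rexp (-((K - ((k : ℝ) + 1) * μ₁) / (Real.sqrt ((k : ℝ) + 1) * σ₁)) ^ 2 / 2) /
        rexp (-((K - (k : ℝ) * μ₁) / (Real.sqrt (k : ℝ) * σ₁)) ^ 2 / 2)
      = rexp (-μ₁ ^ 2 / (2 * σ₁ ^ 2) + K ^ 2 / (2 * k * ((k : ℝ) + 1) * σ₁ ^ 2)) := by
    rw [← Real.exp_sub]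
    congr 1
    rw [div_pow, div_pow, mul_pow, mul_pow, hs1, hs2]
    field_simp
    ring
  refine ⟨heq, ?_⟩
  rw [heq, Real.exp_lt_exp]
  rw [div_add_div _ _ (by positivity) (by positivity), div_lt_div_iff₀ (by positivity) (by positivity)]
  have hsq4 : 4 * K ^ 2 < (k:ℝ) * ((k:ℝ)+1) * μ₁^2 := by nlinarith [mul_nonneg hkpos.le (sq_nonneg μ₁)]
  nlinarith [mul_pos (pow_pos hσ₁ 2) (pow_pos hσ₁ 2), hsq4]
end

section
/- Let μ₁ < 0, σ₁ > 0, K > 0 and set k₀ = ⌊-2K/μ₁⌋ + 1. Then ∑_{k=k₀}^∞ exp(-(K - kμ₁)²/(2kσ₁²)) ≤ exp(9Kμ₁/(4σ₁²)) / (1 - exp(-3μ₁²/(8σ₁²))). -/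
open Real

/-- For `μ₁ < 0`, `σ₁ > 0`, `K > 0` and `k₀ = ⌊-2K/μ₁⌋ + 1`,
`∑_{k=k₀}^∞ exp (-(K - kμ₁)²/(2kσ₁²)) ≤ exp (9Kμ₁/(4σ₁²)) / (1 - exp (-3μ₁²/(8σ₁²)))`. -/
theorem gaussian_tail_geometric_sum (μ₁ σ₁ K : ℝ) (hμ₁ : μ₁ < 0) (hσ₁ : 0 < σ₁)
    (hK : 0 < K) :
    ∑' n : ℕ,
        rexp (-(K - ((Nat.floor (-2 * K / μ₁) + 1 + n : ℕ) : ℝ) * μ₁) ^ 2 /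
          (2 * ((Nat.floor (-2 * K / μ₁) + 1 + n : ℕ) : ℝ) * σ₁ ^ 2))
      ≤ rexp (9 * K * μ₁ / (4 * σ₁ ^ 2)) / (1 - rexp (-3 * μ₁ ^ 2 / (8 * σ₁ ^ 2))) := by
  have hσ2 : (0:ℝ) < σ₁ ^ 2 := by positivity
  set c : ℝ := -2 * K / μ₁ with hc
  have hc0 : 0 < c := div_pos_of_neg_of_neg (by linarith) hμ₁
  have hcμ : c * μ₁ = -2 * K := div_mul_cancel₀ _ (ne_of_lt hμ₁)
  have hk₀ : c < (Nat.floor c : ℝ) + 1 := Nat.lt_floor_add_one c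
  set r : ℝ := rexp (-3 * μ₁ ^ 2 / (8 * σ₁ ^ 2)) with hrdef
  have hr0 : 0 < r := exp_pos _
  have hμ2 : 0 < μ₁ ^ 2 := by nlinarith
  have hr1 : r < 1 := by
    rw [hrdef, exp_lt_one_iff]
    have : 0 < 3 * μ₁ ^ 2 / (8 * σ₁ ^ 2) := div_pos (by nlinarith) (by positivity)
    linarith [this, (by ring : -3 * μ₁ ^ 2 / (8 * σ₁ ^ 2) = -(3 * μ₁ ^ 2 / (8 * σ₁ ^ 2)))]
  set A : ℝ := rexp (9 * K * μ₁ / (4 * σ₁ ^ 2)) with hAdef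
  have key : ∀ n : ℕ,
      rexp (-(K - ((Nat.floor c + 1 + n : ℕ) : ℝ) * μ₁) ^ 2 /
          (2 * ((Nat.floor c + 1 + n : ℕ) : ℝ) * σ₁ ^ 2)) ≤ A * r ^ n := by
    intro n
    set k : ℝ := ((Nat.floor c + 1 + n : ℕ) : ℝ) with hkdef
    have hkc : c + n < k := by
      rw [hkdef]; push_cast; linarith
    have hk0 : 0 < k := by
      have hn : (0:ℝ) ≤ (n:ℝ) := by positivity
      linarith
    rw [hAdef, hrdef, ← Real.exp_nat_mul, ← Real.exp_add]
    apply Real.exp_le_exp.mpr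
    have hn0 : (0:ℝ) ≤ (n:ℝ) := by positivity
    have hu : (0:ℝ) < -μ₁ := neg_pos.2 hμ₁
    have hnu : (0:ℝ) ≤ (n:ℝ) * (-μ₁) := mul_nonneg hn0 hu.le
    have H : 2 * K + (n:ℝ) * (-μ₁) ≤ -(k * μ₁) := by
      nlinarith [mul_lt_mul_of_pos_right hkc hu, hcμ]
    have poly : 3 * n * μ₁ ^ 2 * k - 18 * K * μ₁ * k ≤ 4 * (K - k * μ₁) ^ 2 := by
      nlinarith [mul_nonneg (by linarith : (0:ℝ) ≤ 2 * (-(k * μ₁)) - K)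
          (by linarith : (0:ℝ) ≤ -(k * μ₁) - 2 * K - (n:ℝ) * (-μ₁)),
        mul_nonneg (mul_nonneg hn0 hu.le)
          (by linarith : (0:ℝ) ≤ -(k * μ₁) - 2 * K - (n:ℝ) * (-μ₁)),
        sq_nonneg ((n:ℝ) * μ₁)]
    rw [← sub_nonneg]
    have heq : 9 * K * μ₁ / (4 * σ₁ ^ 2) + (n:ℝ) * (-3 * μ₁ ^ 2 / (8 * σ₁ ^ 2)) -
        -(K - k * μ₁) ^ 2 / (2 * k * σ₁ ^ 2) =
        (4 * (K - k * μ₁) ^ 2 - (3 * n * μ₁ ^ 2 * k - 18 * K * μ₁ * k)) / (8 * k * σ₁ ^ 2) := by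
      field_simp
      ring
    rw [heq]
    exact div_nonneg (by linarith) (by positivity)
  have hgeom : Summable (fun n : ℕ => A * r ^ n) :=
    (summable_geometric_of_lt_one hr0.le hr1).mul_left A
  have hsum : Summable (fun n : ℕ =>
      rexp (-(K - ((Nat.floor c + 1 + n : ℕ) : ℝ) * μ₁) ^ 2 /
          (2 * ((Nat.floor c + 1 + n : ℕ) : ℝ) * σ₁ ^ 2))) :=
    Summable.of_nonneg_of_le (fun n => (exp_pos _).le) key hgeom
  calc ∑' n : ℕ, rexp (-(K - ((Nat.floor c + 1 + n : ℕ) : ℝ) * μ₁) ^ 2 /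
          (2 * ((Nat.floor c + 1 + n : ℕ) : ℝ) * σ₁ ^ 2))
      ≤ ∑' n : ℕ, A * r ^ n := Summable.tsum_le_tsum key hsum hgeom
    _ = A * (1 - r)⁻¹ := by rw [tsum_mul_left, tsum_geometric_of_lt_one hr0.le hr1]
    _ = A / (1 - r) := (div_eq_mul_inv A (1 - r)).symm
end

section
/- Under the consensus recursion z^{t+1} = W(z^t + y^{t+1} - y^t) with z^0 = y^0 = 0, if ‖y^k - y^{k-1}‖₂ ≤ √N·ε·b for all k = 1, ..., t, then for every coordinate j, |z_j^t - (1/N)∑_{i=1}^N y_i^t| ≤ √N·ε·λ₂·b/(1 - λ₂). In particular, if z_j^t > b for some j, then (1/N)∑_{i=1}^N y_i^t > (1 - √N·ε·λ₂/(1 - λ₂))·b. -/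
/-
Write `e^t = z^t - (mean of y^t) • 1`. Since `W` is symmetric with `W 1 = 1`, it preserves means
and commutes with centering, so `e^{t+1} = W (e^t + centered (y^{t+1} - y^t))`. On mean-zero
vectors `W` contracts by `λ₂` (expand in an orthonormal eigenbasis: `1` spans the eigenline of
the eigenvalue `1`), and centering does not increase the Euclidean norm, so
`‖e^{t+1}‖ ≤ λ₂ (‖e^t‖ + √N ε b)`. Starting from `e^0 = 0` this stays below the fixed point
`λ₂ √N ε b / (1 - λ₂)`, which bounds every coordinate of `e^t`.
-/

open Matrix Real
open WithLp
open scoped BigOperators RealInnerProductSpace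

namespace LinearMap.IsSymmetric

variable {ι E : Type*} [Fintype ι] [NormedAddCommGroup E] [InnerProductSpace ℝ E]
  {T : E →ₗ[ℝ] E} {b : OrthonormalBasis ι ℝ E} {μ : ι → ℝ}

lemma inner_apply_eq_mul_of_apply_basis (hT : T.IsSymmetric)
    (hb : ∀ i, T (b i) = μ i • b i) (i : ι) (x : E) : ⟪b i, T x⟫ = μ i * ⟪b i, x⟫ := by
  rw [← hT, hb, real_inner_smul_left]

lemma norm_apply_le_of_abs_le (hT : T.IsSymmetric) (hb : ∀ i, T (b i) = μ i • b i)
    {l : ℝ} (hl : 0 ≤ l) {x : E} (hx : ∀ i, ⟪b i, x⟫ ≠ 0 → |μ i| ≤ l) :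
    ‖T x‖ ≤ l * ‖x‖ := by
  refine (sq_le_sq₀ (norm_nonneg _) (by positivity)).mp ?_
  rw [← b.sum_sq_inner_right, mul_pow, ← b.sum_sq_inner_right, Finset.mul_sum]
  refine Finset.sum_le_sum fun i _ => ?_
  rw [hT.inner_apply_eq_mul_of_apply_basis hb, mul_pow]
  by_cases hi : ⟪b i, x⟫ = 0
  · simp [hi]
  · exact mul_le_mul_of_nonneg_right
      (sq_le_sq' (neg_le_of_abs_le (hx i hi)) (le_of_abs_le (hx i hi))) (sq_nonneg _)

lemma inner_basis_eq_zero_of_apply_eq_self (hT : T.IsSymmetric)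
    (hb : ∀ i, T (b i) = μ i • b i) {v : E} (hv : T v = v) {i : ι} (hi : μ i ≠ 1) :
    ⟪b i, v⟫ = 0 := by
  have h := hT.inner_apply_eq_mul_of_apply_basis hb i v
  rw [hv] at h
  have : (1 - μ i) * ⟪b i, v⟫ = 0 := by linarith
  exact (mul_eq_zero.mp this).resolve_left (sub_ne_zero.mpr hi.symm)

lemma eq_inner_smul_of_apply_eq_self (hT : T.IsSymmetric)
    (hb : ∀ i, T (b i) = μ i • b i) {v : E} (hv : T v = v) {i₀ : ι}
    (hμ : ∀ i, i ≠ i₀ → μ i ≠ 1) : v = ⟪b i₀, v⟫ • b i₀ := by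
  conv_lhs => rw [← b.sum_repr' v]
  exact Finset.sum_eq_single i₀
    (fun i _ hi => by rw [hT.inner_basis_eq_zero_of_apply_eq_self hb hv (hμ i hi), zero_smul])
    (fun h => absurd (Finset.mem_univ i₀) h)

lemma norm_apply_le_of_inner_eq_zero (hT : T.IsSymmetric) (hb : ∀ i, T (b i) = μ i • b i)
    {v : E} (hv : T v = v) (hv0 : v ≠ 0) {i₀ : ι} {l : ℝ} (hl0 : 0 ≤ l) (hl1 : l < 1)
    (hμ : ∀ i, i ≠ i₀ → |μ i| ≤ l) {x : E} (hx : ⟪v, x⟫ = 0) : ‖T x‖ ≤ l * ‖x‖ := by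
  have hμ1 : ∀ i, i ≠ i₀ → μ i ≠ 1 := fun i hi h => by
    have := le_of_abs_le (hμ i hi); linarith
  -- `v` spans the `i₀`-th eigenline, so `x ⊥ v` has no `b i₀`-component.
  have hv_eq := hT.eq_inner_smul_of_apply_eq_self hb hv hμ1
  have hc : ⟪b i₀, v⟫ ≠ 0 := fun h => hv0 (by rw [hv_eq, h, zero_smul])
  have hx₀ : ⟪b i₀, x⟫ = 0 := by
    rw [hv_eq, real_inner_smul_left] at hx
    exact (mul_eq_zero.mp hx).resolve_left hc
  refine hT.norm_apply_le_of_abs_le hb hl0 fun i hi => hμ i ?_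
  rintro rfl
  exact hi hx₀

end LinearMap.IsSymmetric

namespace Matrix

variable {ι : Type*} [Fintype ι] {A : Matrix ι ι ℝ}

lemma IsHermitian.toEuclideanLin_eigenvectorBasis [DecidableEq ι] (hA : A.IsHermitian) (i : ι) :
    toEuclideanLin A (hA.eigenvectorBasis i) = hA.eigenvalues i • hA.eigenvectorBasis i := by
  rw [toLpLin_apply, hA.mulVec_eigenvectorBasis]
  rfl

lemma IsHermitian.norm_mulVec_le_of_sum_eq_zero [DecidableEq ι] (hA : A.IsHermitian)
    (h1 : A *ᵥ (fun _ => 1) = fun _ => 1) {i₀ : ι} {l : ℝ} (hl0 : 0 ≤ l) (hl1 : l < 1)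
    (hμ : ∀ i, i ≠ i₀ → |hA.eigenvalues i| ≤ l) {w : ι → ℝ} (hw : ∑ i, w i = 0) :
    ‖toLp 2 (A *ᵥ w)‖ ≤ l * ‖toLp 2 w‖ := by
  have hv : toEuclideanLin A (toLp 2 fun _ => 1) = toLp 2 fun _ => 1 := by
    rw [toLpLin_apply, ofLp_toLp, h1]
  have hv0 : (toLp 2 fun _ : ι => (1 : ℝ)) ≠ 0 := fun h =>
    one_ne_zero (congrFun (congrArg ofLp h) i₀)
  have hx : ⟪toLp 2 fun _ : ι => (1 : ℝ), toLp 2 w⟫ = 0 := by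
    simpa [EuclideanSpace.inner_toLp_toLp, dotProduct] using hw
  simpa only [toLpLin_apply, ofLp_toLp] using
    (isSymmetric_toEuclideanLin_iff.mpr hA).norm_apply_le_of_inner_eq_zero
      hA.toEuclideanLin_eigenvectorBasis hv hv0 hl0 hl1 hμ hx

lemma IsHermitian.vecMul_eq_mulVec (hA : A.IsHermitian) (x : ι → ℝ) : x ᵥ* A = A *ᵥ x := by
  conv_lhs => rw [← (isHermitian_iff_isSymm.mp hA).eq]
  exact vecMul_transpose A x

lemma sum_mulVec_of_vecMul_one (h1 : (fun _ => 1) ᵥ* A = fun _ => 1) (x : ι → ℝ) :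
    ∑ i, (A *ᵥ x) i = ∑ i, x i := by
  simpa [dotProduct, h1] using dotProduct_mulVec (fun _ => (1 : ℝ)) A x

lemma mulVec_const_of_mulVec_one (h1 : A *ᵥ (fun _ => 1) = fun _ => 1) (c : ℝ) :
    A *ᵥ (fun _ => c) = fun _ => c := by
  have hc : (fun _ : ι => c) = c • fun _ => 1 := by ext; simp
  rw [hc, mulVec_smul, h1]

end Matrix

section Centered

variable {ι : Type*} [Fintype ι]

noncomputable def centered (x : ι → ℝ) : ι → ℝ := fun i => x i - 𝔼 j, x j

lemma sum_centered (x : ι → ℝ) : ∑ i, centered x i = 0 := by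
  simp only [centered]
  rw [Finset.sum_sub_distrib, Finset.sum_const, Finset.card_smul_expect, sub_self]

lemma centered_add (x y : ι → ℝ) : centered (x + y) = centered x + centered y := by
  ext i
  simp only [centered, Pi.add_apply, Finset.expect_add_distrib]
  ring

lemma norm_centered_le (x : ι → ℝ) : ‖toLp 2 (centered x)‖ ≤ ‖toLp 2 x‖ := by
  have hsplit : toLp 2 x = toLp 2 (centered x) + toLp 2 fun _ => 𝔼 j, x j := by
    rw [← toLp_add]; congr 1; ext i; simp [centered]
  have horth : ⟪toLp 2 (centered x), toLp 2 fun _ => 𝔼 j, x j⟫ = 0 := by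
    simp [EuclideanSpace.inner_toLp_toLp, dotProduct, ← Finset.mul_sum, sum_centered]
  refine (mul_self_le_mul_self_iff (norm_nonneg _) (norm_nonneg _)).mpr ?_
  rw [hsplit, norm_add_sq_eq_norm_sq_add_norm_sq_real horth]
  exact le_add_of_nonneg_right (mul_self_nonneg _)

lemma centered_mulVec {A : Matrix ι ι ℝ} (h1 : A *ᵥ (fun _ => 1) = fun _ => 1)
    (h1' : (fun _ => 1) ᵥ* A = fun _ => 1) (x : ι → ℝ) :
    centered (A *ᵥ x) = A *ᵥ centered x := by
  have hx : centered x = x - fun _ => 𝔼 j, x j := rfl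
  rw [hx, mulVec_sub, mulVec_const_of_mulVec_one h1]
  ext i
  simp [centered, Finset.expect_eq_sum_div_card, sum_mulVec_of_vecMul_one h1']

end Centered

-- `l * C / (1 - l)` is the fixed point of `a ↦ l * (a + C)`, i.e. the sum `C * ∑_{k ≥ 1} l ^ k`.
lemma le_mul_div_one_sub_of_le_mul_add {a : ℕ → ℝ} {l C : ℝ} (hl0 : 0 ≤ l) (hl1 : l < 1)
    {t : ℕ} (h0 : a 0 ≤ l * C / (1 - l)) (hstep : ∀ s < t, a (s + 1) ≤ l * (a s + C)) :
    a t ≤ l * C / (1 - l) := by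
  induction t with
  | zero => exact h0
  | succ s ih =>
    have hfix : l * (l * C / (1 - l) + C) = l * C / (1 - l) := by
      field_simp [(sub_pos.mpr hl1).ne']
      ring
    calc a (s + 1) ≤ l * (a s + C) := hstep s s.lt_succ_self
      _ ≤ l * (l * C / (1 - l) + C) := by
        gcongr
        exact ih fun s' hs' => hstep s' (hs'.trans s.lt_succ_self)
      _ = l * C / (1 - l) := hfix

section Consensus

variable {ι : Type*} [Fintype ι] {A : Matrix ι ι ℝ} {y z : ℕ → ι → ℝ}

lemma expect_consensus_eq (h1' : (fun _ => 1) ᵥ* A = fun _ => 1) (hy0 : y 0 = 0)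
    (hz0 : z 0 = 0) (hrec : ∀ t, z (t + 1) = A *ᵥ (z t + y (t + 1) - y t)) (t : ℕ) :
    𝔼 i, z t i = 𝔼 i, y t i := by
  induction t with
  | zero => simp [hy0, hz0]
  | succ t ih =>
    rw [hrec, Finset.expect_eq_sum_div_card, sum_mulVec_of_vecMul_one h1',
      ← Finset.expect_eq_sum_div_card]
    simp [Finset.expect_sub_distrib, Finset.expect_add_distrib, ih]

lemma centered_consensus_succ (h1 : A *ᵥ (fun _ => 1) = fun _ => 1)
    (h1' : (fun _ => 1) ᵥ* A = fun _ => 1)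
    (hrec : ∀ t, z (t + 1) = A *ᵥ (z t + y (t + 1) - y t)) (t : ℕ) :
    centered (z (t + 1)) = A *ᵥ (centered (z t) + centered (y (t + 1) - y t)) := by
  rw [hrec, add_sub_assoc, centered_mulVec h1 h1', centered_add]

lemma norm_centered_consensus_le {l C : ℝ} (hl0 : 0 ≤ l) (hl1 : l < 1)
    (hA : ∀ w : ι → ℝ, ∑ i, w i = 0 → ‖toLp 2 (A *ᵥ w)‖ ≤ l * ‖toLp 2 w‖)
    (h1 : A *ᵥ (fun _ => 1) = fun _ => 1) (h1' : (fun _ => 1) ᵥ* A = fun _ => 1)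
    (hz0 : z 0 = 0) (hrec : ∀ t, z (t + 1) = A *ᵥ (z t + y (t + 1) - y t)) (hC : 0 ≤ C)
    {t : ℕ} (hinc : ∀ k ∈ Finset.Icc 1 t, ‖toLp 2 (y k - y (k - 1))‖ ≤ C) :
    ‖toLp 2 (centered (z t))‖ ≤ l * C / (1 - l) := by
  refine le_mul_div_one_sub_of_le_mul_add (a := fun s => ‖toLp 2 (centered (z s))‖)
    hl0 hl1 ?_ fun s hs => ?_
  · have : centered (z 0) = 0 := by ext; simp [centered, hz0]
    simp only [this, toLp_zero, norm_zero]
    exact div_nonneg (mul_nonneg hl0 hC) (sub_pos.mpr hl1).le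
  · have hinc' : ‖toLp 2 (y (s + 1) - y s)‖ ≤ C :=
      hinc (s + 1) (Finset.mem_Icc.mpr ⟨by omega, by omega⟩)
    simp only [centered_consensus_succ h1 h1' hrec]
    calc _ ≤ l * ‖toLp 2 (centered (z s) + centered (y (s + 1) - y s))‖ :=
          hA _ (by simp only [Pi.add_apply, Finset.sum_add_distrib, sum_centered, add_zero])
      _ ≤ l * (‖toLp 2 (centered (z s))‖ + C) := by
        gcongr
        rw [toLp_add]
        exact (norm_add_le _ _).trans (add_le_add_right ((norm_centered_le _).trans hinc') _)

lemma abs_sub_expect_consensus_le {l C : ℝ} (hl0 : 0 ≤ l) (hl1 : l < 1)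
    (hA : ∀ w : ι → ℝ, ∑ i, w i = 0 → ‖toLp 2 (A *ᵥ w)‖ ≤ l * ‖toLp 2 w‖)
    (h1 : A *ᵥ (fun _ => 1) = fun _ => 1) (h1' : (fun _ => 1) ᵥ* A = fun _ => 1)
    (hy0 : y 0 = 0) (hz0 : z 0 = 0) (hrec : ∀ t, z (t + 1) = A *ᵥ (z t + y (t + 1) - y t))
    (hC : 0 ≤ C) {t : ℕ} (hinc : ∀ k ∈ Finset.Icc 1 t, ‖toLp 2 (y k - y (k - 1))‖ ≤ C)
    (j : ι) : |z t j - 𝔼 i, y t i| ≤ l * C / (1 - l) := by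
  rw [← expect_consensus_eq h1' hy0 hz0 hrec]
  calc |z t j - 𝔼 i, z t i| ≤ ‖toLp 2 (centered (z t))‖ := by
        simpa [centered] using PiLp.norm_apply_le (toLp 2 (centered (z t))) j
    _ ≤ l * C / (1 - l) := norm_centered_consensus_le hl0 hl1 hA h1 h1' hz0 hrec hC hinc

end Consensus

theorem consensus_threshold_transfer_general (N : ℕ)
    (W : Matrix (Fin N) (Fin N) ℝ) (hherm : W.IsHermitian)
    (hstoch : W.mulVec (fun _ => 1) = fun _ => 1)
    (l₂ : ℝ) (hl₂0 : 0 < l₂) (hl₂1 : l₂ < 1)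
    (hspec : ∃ i₀ : Fin N, hherm.eigenvalues i₀ = 1 ∧
      ∀ i : Fin N, i ≠ i₀ → |hherm.eigenvalues i| ≤ l₂)
    (y z : ℕ → Fin N → ℝ) (hy0 : y 0 = 0) (hz0 : z 0 = 0)
    (hrec : ∀ t, z (t + 1) = W.mulVec (z t + y (t + 1) - y t))
    (ε b : ℝ) (hε : 0 < ε) (hb : 0 < b) (t : ℕ)
    (hinc : ∀ k ∈ Finset.Icc 1 t,
      Real.sqrt (∑ i, (y k i - y (k - 1) i) ^ 2) ≤ Real.sqrt N * ε * b) :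
    (∀ j : Fin N,
      |z t j - (N : ℝ)⁻¹ * ∑ i, y t i| ≤ Real.sqrt N * ε * l₂ * b / (1 - l₂)) ∧
    (∀ j : Fin N, b < z t j →
      (1 - Real.sqrt N * ε * l₂ / (1 - l₂)) * b < (N : ℝ)⁻¹ * ∑ i, y t i) := by
  obtain ⟨i₀, -, hμ⟩ := hspec
  have hstoch' : (fun _ => 1) ᵥ* W = fun _ => 1 := (hherm.vecMul_eq_mulVec _).trans hstoch
  have hdev (j : Fin N) : |z t j - (N : ℝ)⁻¹ * ∑ i, y t i| ≤ √N * ε * l₂ * b / (1 - l₂) := by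
    have h := abs_sub_expect_consensus_le hl₂0.le hl₂1
      (fun _ => hherm.norm_mulVec_le_of_sum_eq_zero hstoch hl₂0.le hl₂1 hμ) hstoch hstoch'
      hy0 hz0 hrec (by positivity : 0 ≤ √N * ε * b)
      (fun k hk => by simpa [EuclideanSpace.norm_eq] using hinc k hk) j
    rw [Fintype.expect_eq_sum_div_card, Fintype.card_fin, div_eq_inv_mul] at h
    convert h using 1
    ring
  refine ⟨hdev, fun j hj => ?_⟩
  have hb' : (1 - √N * ε * l₂ / (1 - l₂)) * b = b - √N * ε * l₂ * b / (1 - l₂) := by ring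
  linarith [(abs_le.mp (hdev j)).2]

/-- Under the consensus recursion with increments bounded by `√N ε b`, every
consensus coordinate stays within `√N ε λ₂ b / (1 - λ₂)` of the average of the
local statistics; in particular, if `z_j^t > b` then the average exceeds
`(1 - √N ε λ₂ / (1 - λ₂)) b`. -/
theorem consensus_threshold_transfer (N : ℕ) (hN : 0 < N)
    (W : Matrix (Fin N) (Fin N) ℝ) (hherm : W.IsHermitian)
    (hstoch : W.mulVec (fun _ => 1) = fun _ => 1)
    (l₂ : ℝ) (hl₂0 : 0 < l₂) (hl₂1 : l₂ < 1)
    (hspec : ∃ i₀ : Fin N, hherm.eigenvalues i₀ = 1 ∧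
      ∀ i : Fin N, i ≠ i₀ → |hherm.eigenvalues i| ≤ l₂)
    (y z : ℕ → Fin N → ℝ) (hy0 : y 0 = 0) (hz0 : z 0 = 0)
    (hrec : ∀ t, z (t + 1) = W.mulVec (z t + y (t + 1) - y t))
    (ε b : ℝ) (hε : 0 < ε) (hb : 0 < b) (t : ℕ)
    (hinc : ∀ k ∈ Finset.Icc 1 t,
      Real.sqrt (∑ i, (y k i - y (k - 1) i) ^ 2) ≤ Real.sqrt N * ε * b) :
    (∀ j : Fin N,
      |z t j - (N : ℝ)⁻¹ * ∑ i, y t i| ≤ Real.sqrt N * ε * l₂ * b / (1 - l₂)) ∧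
    (∀ j : Fin N, b < z t j →
      (1 - Real.sqrt N * ε * l₂ / (1 - l₂)) * b < (N : ℝ)⁻¹ * ∑ i, y t i) :=
  consensus_threshold_transfer_general N W hherm hstoch l₂ hl₂0 hl₂1 hspec y z hy0 hz0 hrec ε b hε
    hb t hinc
end
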